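/- Let g be a derivator with continuous part g^C and jump part g^B on [a,b]. For every f ∈ L¹_g([a,b); 𝔽) and every t ∈ [a,b], ∫_{[a,t)} f dμ_g = ∫_{[a,t)} f dμ_{g^C} + ∑_{s ∈ [a,t) ∩ D_g} f(s) Δ⁺g(s). -/

import Mathlib

open MeasureTheory Set Function Filter Topology

noncomputable section

/-- A derivator: a non-decreasing, left-continuous function. -/
def IsDerivator (g : ℝ → ℝ) : Prop :=
  Monotone g ∧ ∀ x : ℝ, ContinuousWithinAt g (Set.Iic x) x

/-- The jump `Δ⁺g(t) = g(t⁺) - g(t)`. -/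
def jumpG (g : ℝ → ℝ) (t : ℝ) : ℝ := Function.rightLim g t - g t

/-- The set of discontinuity points of `g`. -/
def Dg (g : ℝ → ℝ) : Set ℝ := {t | 0 < jumpG g t}

/-- The jump part `g^B` of `g`, with base point `a`. -/
def jumpPart (g : ℝ → ℝ) (a : ℝ) : ℝ → ℝ := fun t =>
  if a < t then ∑' s : (Set.Ico a t : Set ℝ), jumpG g s
  else - ∑' s : (Set.Ico t a : Set ℝ), jumpG g s

/-- The continuous part `g^C = g - g^B` of `g`, with base point `a`. -/
def contPart (g : ℝ → ℝ) (a : ℝ) : ℝ → ℝ := fun t => g t - jumpPart g a t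

/-- The Lebesgue–Stieltjes outer measure associated to `g`, generated by
`μ_g([c,d)) = g d - g c` on half-open intervals. -/
def stieltjesOuter (g : ℝ → ℝ) : OuterMeasure ℝ :=
  OuterMeasure.ofFunction
    (fun s => ⨅ (p : ℝ × ℝ) (_ : s = Set.Ico p.1 p.2), ENNReal.ofReal (g p.2 - g p.1))
    (by
      refine le_antisymm ?_ zero_le
      refine le_trans (iInf₂_le ((0 : ℝ), (0 : ℝ)) ?_) ?_ <;> simp)

open Classical in
/-- The Lebesgue–Stieltjes measure of a non-decreasing left-continuous `g`: the measure with
`μ_g([c,d)) = g d - g c`.  It is realised as the Stieltjes measure of the right-continuous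
modification of `g`. -/
def stieltjesMeasure (g : ℝ → ℝ) : Measure ℝ :=
  if h : Monotone g then h.stieltjesFunction.measure else 0

variable {E : Type*} [NormedAddCommGroup E]

/-- `f` is `g`-continuous at `t` relative to the set `s`. -/
def GContWithin (g : ℝ → ℝ) (f : ℝ → E) (s : Set ℝ) (t : ℝ) : Prop :=
  ∀ ε > 0, ∃ δ > 0, ∀ u ∈ s, |g t - g u| < δ → ‖f t - f u‖ < ε

/-- `f` is `g`-continuous on the set `s`. -/
def GContOn (g : ℝ → ℝ) (f : ℝ → E) (s : Set ℝ) : Prop := ∀ t ∈ s, GContWithin g f s t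

/-- `t` lies in `C_g`: `g` is constant in a neighbourhood of `t`. -/
def InCg (g : ℝ → ℝ) (t : ℝ) : Prop :=
  ∃ ε > 0, ∀ u ∈ Set.Ioo (t - ε) (t + ε), ∀ v ∈ Set.Ioo (t - ε) (t + ε), g u = g v

/-- `t ∈ N_g⁻`: `t` is the left endpoint of a constancy interval of `g`, `t ∉ D_g`. -/
def InNgMinus (g : ℝ → ℝ) (t : ℝ) : Prop :=
  t ∉ Dg g ∧ ¬ InCg g t ∧
    ∃ ε > 0, ∀ u ∈ Set.Ioo t (t + ε), ∀ v ∈ Set.Ioo t (t + ε), g u = g v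

/-- `t ∈ N_g⁺`: `t` is the right endpoint of a constancy interval of `g`, `t ∉ D_g`. -/
def InNgPlus (g : ℝ → ℝ) (t : ℝ) : Prop :=
  t ∉ Dg g ∧ ¬ InCg g t ∧
    ∃ ε > 0, ∀ u ∈ Set.Ioo (t - ε) t, ∀ v ∈ Set.Ioo (t - ε) t, g u = g v

/-- The right endpoint `bₙ` of the constancy component of `g` containing `t`. -/
def compEnd (g : ℝ → ℝ) (t : ℝ) : ℝ := sSup {u | ∀ v ∈ Set.Icc t u, g v = g t}

open Classical in
/-- The Stieltjes `g`-derivative of `f : s → E` at `t`, in the extended sense: at points of `D_g`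
one takes the right-hand limit of the difference quotient, at points of `C_g` the right-hand
limit at the right endpoint of the constancy component, and elsewhere the limit of the difference
quotient restricted to points where `g` differs from `g t` (this covers the points of `N_g`). -/
def HasGDerivWithinAt [NormedSpace ℝ E] (g : ℝ → ℝ) (f : ℝ → E) (s : Set ℝ) (t : ℝ) (L : E) :
    Prop :=
  if t ∈ Dg g then
    Tendsto (fun u => (g u - g t)⁻¹ • (f u - f t)) (𝓝[s ∩ Set.Ioi t] t) (𝓝 L)
  else if InCg g t then
    Tendsto (fun u => (g u - g (compEnd g t))⁻¹ • (f u - f (compEnd g t)))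
      (𝓝[s ∩ Set.Ioi (compEnd g t)] (compEnd g t)) (𝓝 L)
  else
    Tendsto (fun u => (g u - g t)⁻¹ • (f u - f t)) (𝓝[s ∩ {u | g u ≠ g t}] t) (𝓝 L)

/-- `v` is `g`-absolutely continuous on `[0,T]`: it is an indefinite `μ_g`-integral. -/
def ACgOn (g : ℝ → ℝ) (v : ℝ → ℂ) (T : ℝ) : Prop :=
  ∃ h : ℝ → ℂ, MeasureTheory.IntegrableOn h (Set.Ico 0 T) (stieltjesMeasure g) ∧
    ∀ t ∈ Set.Icc 0 T, v t = v 0 + ∫ s in Set.Ico 0 t, h s ∂(stieltjesMeasure g)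

end

noncomputable section StieltjesAux

open scoped ENNReal

variable {g : ℝ → ℝ}

lemma jumpG_nonneg (hm : Monotone g) (s : ℝ) : 0 ≤ jumpG g s :=
  sub_nonneg.2 (hm.le_rightLim le_rfl)

lemma sum_jump_le (hm : Monotone g) (F : Finset ℝ) :
    ∀ c d : ℝ, c ≤ d → ↑F ⊆ Set.Ico c d → ∑ s ∈ F, jumpG g s ≤ g d - g c := by
  induction F using Finset.strongInduction with
  | _ F ih =>
    intro c d hcd hF
    rcases F.eq_empty_or_nonempty with rfl | hne
    · simpa using sub_nonneg.2 (hm hcd)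
    · set m := F.max' hne with hmdef
      have hmF : m ∈ F := F.max'_mem hne
      have hm1 : m ∈ Set.Ico c d := hF hmF
      have herase : ↑(F.erase m) ⊆ Set.Ico c m := by
        intro x hx
        have hxF : x ∈ F := Finset.mem_of_mem_erase hx
        exact ⟨(hF hxF).1, lt_of_le_of_ne (F.le_max' x hxF) (Finset.ne_of_mem_erase hx)⟩
      have hsum := ih (F.erase m) (Finset.erase_ssubset hmF) c m hm1.1 herase
      have hj : jumpG g m ≤ g d - g m := sub_le_sub_right (hm.rightLim_le hm1.2) _
      calc ∑ s ∈ F, jumpG g s = jumpG g m + ∑ s ∈ F.erase m, jumpG g s :=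
            (Finset.add_sum_erase F _ hmF).symm
        _ ≤ (g d - g m) + (g m - g c) := add_le_add hj hsum
        _ = g d - g c := by ring

lemma summable_jump (hm : Monotone g) (c d : ℝ) :
    Summable fun s : (Set.Ico c d : Set ℝ) => jumpG g s.1 := by
  rcases le_or_gt c d with hcd | hcd
  · refine summable_of_sum_le (c := g d - g c) (fun s => jumpG_nonneg hm _) (fun u => ?_)
    have himg : ↑(u.image (Subtype.val : ↥(Set.Ico c d) → ℝ)) ⊆ Set.Ico c d := by
      intro x hx
      simp only [Finset.coe_image, Set.mem_image] at hx
      obtain ⟨y, -, rfl⟩ := hx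
      exact y.2
    have h := sum_jump_le hm (u.image Subtype.val) c d hcd himg
    rwa [Finset.sum_image (fun x _ y _ h => Subtype.ext h)] at h
  · haveI : IsEmpty (Set.Ico c d : Set ℝ) := by
      rw [Set.Ico_eq_empty hcd.not_gt]; infer_instance
    exact summable_empty

/-- The sum of the jumps of `g` over `[c, d)`. -/
def Jsum (g : ℝ → ℝ) (c d : ℝ) : ℝ := ∑' s : (Set.Ico c d : Set ℝ), jumpG g s.1

lemma Jsum_nonneg (hm : Monotone g) (c d : ℝ) : 0 ≤ Jsum g c d :=
  tsum_nonneg fun s => jumpG_nonneg hm _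

lemma finsetsum_le_Jsum (hm : Monotone g) (F : Finset ℝ) {c d : ℝ}
    (h : ↑F ⊆ Set.Ico c d) : ∑ s ∈ F, jumpG g s ≤ Jsum g c d := by
  have hsum : Summable ((Set.Ico c d).indicator (jumpG g)) :=
    summable_subtype_iff_indicator.mp (summable_jump hm c d)
  rw [Jsum, tsum_subtype]
  calc ∑ s ∈ F, jumpG g s = ∑ s ∈ F, (Set.Ico c d).indicator (jumpG g) s :=
        Finset.sum_congr rfl fun x hx => (Set.indicator_of_mem (h hx) _).symm
    _ ≤ _ := Summable.sum_le_tsum F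
        (fun i _ => Set.indicator_nonneg (fun x _ => jumpG_nonneg hm x) i) hsum

lemma Jsum_le (hm : Monotone g) {c d : ℝ} (hcd : c ≤ d) : Jsum g c d ≤ g d - g c := by
  refine Summable.tsum_le_of_sum_le (summable_jump hm c d) fun u => ?_
  have himg : ↑(u.image (Subtype.val : ↥(Set.Ico c d) → ℝ)) ⊆ Set.Ico c d := by
    intro x hx
    simp only [Finset.coe_image, Set.mem_image] at hx
    obtain ⟨y, -, rfl⟩ := hx
    exact y.2
  have h := sum_jump_le hm (u.image Subtype.val) c d hcd himg
  rwa [Finset.sum_image (fun x _ y _ h => Subtype.ext h)] at h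

lemma Jsum_self (c : ℝ) : Jsum g c c = 0 := by
  haveI : IsEmpty (Set.Ico c c : Set ℝ) := by rw [Set.Ico_self]; infer_instance
  exact tsum_empty

lemma Jsum_add (hm : Monotone g) {c d e : ℝ} (h1 : c ≤ d) (h2 : d ≤ e) :
    Jsum g c e = Jsum g c d + Jsum g d e := by
  have h := Summable.tsum_union_disjoint (f := fun s : ℝ => jumpG g s)
    (Set.Ico_disjoint_Ico_same (a := c) (b := d) (c := e))
    (summable_jump hm c d) (summable_jump hm d e)
  rw [Set.Ico_union_Ico_eq_Ico h1 h2] at h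
  exact h

lemma jumpPart_of_le {a x : ℝ} (hax : a ≤ x) : jumpPart g a x = Jsum g a x := by
  rcases eq_or_lt_of_le hax with rfl | h
  · show (if a < a then _ else -∑' s : (Set.Ico a a : Set ℝ), jumpG g s.1) = _
    rw [if_neg (lt_irrefl a)]
    show -Jsum g a a = Jsum g a a
    rw [Jsum_self, neg_zero]
  · show (if a < x then ∑' s : (Set.Ico a x : Set ℝ), jumpG g s.1 else _) = _
    rw [if_pos h]
    rfl

lemma jumpPart_of_ge {a x : ℝ} (hxa : x ≤ a) : jumpPart g a x = - Jsum g x a := by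
  rcases eq_or_lt_of_le hxa with rfl | h
  · show (if x < x then _ else -∑' s : (Set.Ico x x : Set ℝ), jumpG g s.1) = _
    rw [if_neg (lt_irrefl x)]
    rfl
  · show (if a < x then _ else -∑' s : (Set.Ico x a : Set ℝ), jumpG g s.1) = _
    rw [if_neg h.not_gt]
    rfl

lemma jumpPart_sub (hm : Monotone g) (a : ℝ) {c d : ℝ} (hcd : c ≤ d) :
    jumpPart g a d - jumpPart g a c = Jsum g c d := by
  rcases le_total a c with hac | hca
  · rw [jumpPart_of_le (hac.trans hcd), jumpPart_of_le hac, Jsum_add hm hac hcd]; ring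
  · rcases le_total a d with had | hda
    · rw [jumpPart_of_le had, jumpPart_of_ge hca, Jsum_add hm hca had]; ring
    · rw [jumpPart_of_ge hda, jumpPart_of_ge hca, Jsum_add hm hcd hda]; ring

lemma jumpPart_mono (hm : Monotone g) (a : ℝ) : Monotone (jumpPart g a) := by
  intro c d hcd
  have h := jumpPart_sub hm a hcd
  have h2 := Jsum_nonneg hm c d
  linarith

lemma contPart_mono (hm : Monotone g) (a : ℝ) : Monotone (contPart g a) := by
  intro c d hcd
  have h1 := jumpPart_sub hm a hcd
  have h2 := Jsum_le hm hcd
  simp only [contPart]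
  linarith

lemma jumpPart_leftLim (hm : Monotone g) (a x : ℝ) :
    Function.leftLim (jumpPart g a) x = jumpPart g a x := by
  have hmono := jumpPart_mono hm a
  refine le_antisymm (hmono.leftLim_le le_rfl) ?_
  refine le_of_forall_pos_le_add fun ε hε => ?_
  have hsa : Summable fun s : (Set.Ico (x-1) x : Set ℝ) => jumpG g s.1 :=
    summable_jump hm _ _
  obtain ⟨F, hF⟩ : ∃ F : Finset (Set.Ico (x-1) x : Set ℝ),
      Jsum g (x-1) x - ε < ∑ s ∈ F, jumpG g s.1 := by
    have hlt : Jsum g (x-1) x - ε < Jsum g (x-1) x := by linarith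
    exact (hsa.hasSum.eventually (eventually_gt_nhds hlt)).exists
  set T : Finset ℝ := insert (x-1) (F.image Subtype.val) with hT
  have hTne : T.Nonempty := ⟨x-1, Finset.mem_insert_self _ _⟩
  set m := T.max' hTne with hmdef
  have hmlt : m < x := by
    have hmem : m ∈ T := T.max'_mem hTne
    rcases Finset.mem_insert.1 hmem with h | h
    · rw [h]; linarith
    · obtain ⟨s, hs, hsm⟩ := Finset.mem_image.1 h
      rw [← hsm]; exact s.2.2
  set u := (m + x) / 2 with hu
  have hmu : m < u := by rw [hu]; linarith
  have hux : u < x := by rw [hu]; linarith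
  have hx1m : x - 1 ≤ m := T.le_max' _ (Finset.mem_insert_self _ _)
  have hx1u : x - 1 ≤ u := by linarith
  have himg : ↑(F.image (Subtype.val : ↥(Set.Ico (x-1) x) → ℝ)) ⊆ Set.Ico (x-1) u := by
    intro y hy
    simp only [Finset.coe_image, Set.mem_image] at hy
    obtain ⟨s, hs, rfl⟩ := hy
    refine ⟨s.2.1, lt_of_le_of_lt ?_ hmu⟩
    exact T.le_max' _ (Finset.mem_insert_of_mem
      (Finset.mem_image_of_mem _ (Finset.mem_coe.1 hs)))
  have hFsum : ∑ s ∈ F, jumpG g s.1 ≤ Jsum g (x-1) u := by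
    have h := finsetsum_le_Jsum hm (F.image Subtype.val) himg
    rwa [Finset.sum_image (fun x _ y _ h => Subtype.ext h)] at h
  have hsplit : Jsum g (x-1) x = Jsum g (x-1) u + Jsum g u x := Jsum_add hm hx1u hux.le
  have hsub : jumpPart g a x - jumpPart g a u = Jsum g u x := jumpPart_sub hm a hux.le
  have hle : jumpPart g a u ≤ Function.leftLim (jumpPart g a) x := hmono.le_leftLim hux
  linarith

lemma derivator_leftLim (hg : IsDerivator g) (x : ℝ) : Function.leftLim g x = g x :=
  leftLim_eq_of_tendsto
    ((hg.2 x).mono_left (nhdsWithin_mono x Set.Iio_subset_Iic_self))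

lemma contPart_leftLim (hg : IsDerivator g) (a x : ℝ) :
    Function.leftLim (contPart g a) x = contPart g a x := by
  have hm := hg.1
  apply leftLim_eq_of_tendsto
  have h1 : Filter.Tendsto g (nhdsWithin x (Set.Iio x)) (nhds (g x)) :=
    (hg.2 x).mono_left (nhdsWithin_mono x Set.Iio_subset_Iic_self)
  have h2 : Filter.Tendsto (jumpPart g a) (nhdsWithin x (Set.Iio x))
      (nhds (jumpPart g a x)) := by
    have h := (jumpPart_mono hm a).tendsto_leftLim x
    rwa [jumpPart_leftLim hm a x] at h
  exact h1.sub h2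

lemma stieltjesMeasure_Ico {h : ℝ → ℝ} (hmono : Monotone h)
    (hlc : ∀ x : ℝ, Function.leftLim h x = h x) (c d : ℝ) :
    stieltjesMeasure h (Set.Ico c d) = ENNReal.ofReal (h d - h c) := by
  unfold stieltjesMeasure
  rw [dif_pos hmono, StieltjesFunction.measure_Ico]
  have key : ∀ x : ℝ, Function.leftLim (hmono.stieltjesFunction) x = h x := by
    intro x
    apply leftLim_eq_of_tendsto
    have hlow : Filter.Tendsto h (nhdsWithin x (Set.Iio x)) (nhds (h x)) := by
      have h' := hmono.tendsto_leftLim x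
      rwa [hlc x] at h'
    refine tendsto_of_tendsto_of_tendsto_of_le_of_le' hlow tendsto_const_nhds ?_ ?_
    · exact Filter.Eventually.of_forall fun u => by
        rw [hmono.stieltjesFunction_eq]; exact hmono.le_rightLim le_rfl
    · filter_upwards [self_mem_nhdsWithin] with u hu
      rw [hmono.stieltjesFunction_eq]; exact hmono.rightLim_le hu
  rw [key, key]

lemma Dg_countable (hm : Monotone g) : (Dg g).Countable := by
  refine Set.Countable.mono ?_ hm.countable_not_continuousAt
  intro x hx
  simp only [Set.mem_setOf_eq]
  intro hc
  have hr : Function.rightLim g x = g x := rightLim_eq_of_tendsto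
    (hc.tendsto.mono_left nhdsWithin_le_nhds)
  simp only [Dg, Set.mem_setOf_eq, jumpG, hr, sub_self, lt_irrefl] at hx

lemma sumDirac_apply {S : Set ℝ} [Countable S] (w : ℝ → ℝ≥0∞) {A : Set ℝ}
    (hA : MeasurableSet A) :
    MeasureTheory.Measure.sum (fun s : S => w s.1 • MeasureTheory.Measure.dirac s.1) A
      = ∑' x : ℝ, (A ∩ S).indicator w x := by
  rw [MeasureTheory.Measure.sum_apply _ hA]
  have h1 : ∀ s : S, (w s.1 • MeasureTheory.Measure.dirac s.1) A = A.indicator w s.1 := by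
    intro s
    rw [MeasureTheory.Measure.smul_apply, MeasureTheory.Measure.dirac_apply' _ hA, smul_eq_mul]
    by_cases h : s.1 ∈ A
    · simp [Set.indicator_of_mem h]
    · simp [Set.indicator_of_notMem h]
  rw [tsum_congr h1, tsum_subtype S (A.indicator w)]
  exact tsum_congr fun x => by rw [Set.indicator_indicator, Set.inter_comm]

/-- The purely atomic part of the Lebesgue–Stieltjes measure of `g`. -/
def jumpMeasure (g : ℝ → ℝ) (hD : (Dg g).Countable) : MeasureTheory.Measure ℝ :=
  haveI := hD.to_subtype
  MeasureTheory.Measure.sum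
    (fun s : (Dg g : Set ℝ) => ENNReal.ofReal (jumpG g s.1) • MeasureTheory.Measure.dirac s.1)

set_option maxHeartbeats 1000000 in
lemma jumpMeasure_apply (hD : (Dg g).Countable) {A : Set ℝ} (hA : MeasurableSet A) :
    jumpMeasure g hD A
      = ∑' x : ℝ, (A ∩ Dg g).indicator (fun x => ENNReal.ofReal (jumpG g x)) x := by
  haveI := hD.to_subtype
  have hrfl : jumpMeasure g hD = MeasureTheory.Measure.sum
      (fun s : (Dg g : Set ℝ) =>
        ENNReal.ofReal (jumpG g s.1) • MeasureTheory.Measure.dirac s.1) := rfl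
  rw [hrfl]
  exact sumDirac_apply (S := Dg g) (fun x => ENNReal.ofReal (jumpG g x)) hA

lemma jumpG_eq_zero (hm : Monotone g) {x : ℝ} (hx : x ∉ Dg g) : jumpG g x = 0 := by
  have h1 := jumpG_nonneg hm x
  simp only [Dg, Set.mem_setOf_eq, not_lt] at hx
  linarith

lemma jumpMeasure_Ico (hm : Monotone g) (hD : (Dg g).Countable) (c d : ℝ) :
    jumpMeasure g hD (Set.Ico c d) = ENNReal.ofReal (Jsum g c d) := by
  rw [jumpMeasure_apply hD measurableSet_Ico]
  have hcong : ∀ x : ℝ, (Set.Ico c d ∩ Dg g).indicator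
        (fun x => ENNReal.ofReal (jumpG g x)) x
      = (Set.Ico c d).indicator (fun x => ENNReal.ofReal (jumpG g x)) x := by
    intro x
    by_cases hD' : x ∈ Dg g
    · by_cases hI : x ∈ Set.Ico c d
      · rw [Set.indicator_of_mem (Set.mem_inter hI hD'), Set.indicator_of_mem hI]
      · rw [Set.indicator_of_notMem (fun h => hI h.1), Set.indicator_of_notMem hI]
    · by_cases hI : x ∈ Set.Ico c d
      · rw [Set.indicator_of_notMem (fun h => hD' h.2), Set.indicator_of_mem hI,
          jumpG_eq_zero hm hD']
        simp
      · rw [Set.indicator_of_notMem (fun h => hD' h.2), Set.indicator_of_notMem hI]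
  rw [tsum_congr hcong, ← tsum_subtype, Jsum,
    ENNReal.ofReal_tsum_of_nonneg (fun s => jumpG_nonneg hm _) (summable_jump hm c d)]

lemma measure_decomp (hg : IsDerivator g) (a : ℝ) (hD : (Dg g).Countable) :
    stieltjesMeasure g = stieltjesMeasure (contPart g a) + jumpMeasure g hD := by
  have hm := hg.1
  haveI : MeasureTheory.IsLocallyFiniteMeasure (stieltjesMeasure g) := by
    unfold stieltjesMeasure; rw [dif_pos hm]; infer_instance
  refine MeasureTheory.Measure.ext_of_Ico _ _ fun c d hcd => ?_
  rw [stieltjesMeasure_Ico hm (derivator_leftLim hg), MeasureTheory.Measure.add_apply,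
    stieltjesMeasure_Ico (contPart_mono hm a) (contPart_leftLim hg a),
    jumpMeasure_Ico hm hD c d,
    ← ENNReal.ofReal_add (sub_nonneg.2 (contPart_mono hm a hcd.le)) (Jsum_nonneg hm c d)]
  congr 1
  have h := jumpPart_sub hm a hcd.le
  simp only [contPart]
  linarith

end StieltjesAux

/-- decomposition of the Lebesgue–Stieltjes integral into its continuous part and
the sum over the jumps: `∫_{[a,t)} f dμ_g = ∫_{[a,t)} f dμ_{g^C} + ∑_{s∈[a,t)∩D_g} f(s)Δ⁺g(s)`. -/
theorem stmt3 {𝕜 : Type*} [RCLike 𝕜] (g : ℝ → ℝ) (hg : IsDerivator g) (a b : ℝ) (hab : a ≤ b)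
    (f : ℝ → 𝕜) (hf : MeasureTheory.IntegrableOn f (Set.Ico a b) (stieltjesMeasure g))
    (t : ℝ) (ht : t ∈ Set.Icc a b) :
    ∫ x in Set.Ico a t, f x ∂(stieltjesMeasure g) =
      (∫ x in Set.Ico a t, f x ∂(stieltjesMeasure (contPart g a))) +
        ∑' s : (Set.Ico a t ∩ Dg g : Set ℝ), jumpG g s.1 • f s.1 := by
  classical
  have hm := hg.1
  have hD : (Dg g).Countable := Dg_countable hm
  have hdec := measure_decomp hg a hD
  have hI : MeasurableSet (Set.Ico a t) := measurableSet_Ico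
  have hrestr : (stieltjesMeasure g).restrict (Set.Ico a t)
      = (stieltjesMeasure (contPart g a)).restrict (Set.Ico a t)
        + (jumpMeasure g hD).restrict (Set.Ico a t) := by
    rw [hdec, MeasureTheory.Measure.restrict_add]
  have hf' : MeasureTheory.Integrable f ((stieltjesMeasure g).restrict (Set.Ico a t)) :=
    hf.mono_set (Set.Ico_subset_Ico_right ht.2)
  have hle1 : (stieltjesMeasure (contPart g a)).restrict (Set.Ico a t)
      ≤ (stieltjesMeasure g).restrict (Set.Ico a t) := by
    rw [hrestr]; exact MeasureTheory.Measure.le_add_right le_rfl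
  have hle2 : (jumpMeasure g hD).restrict (Set.Ico a t)
      ≤ (stieltjesMeasure g).restrict (Set.Ico a t) := by
    rw [hrestr]; exact MeasureTheory.Measure.le_add_left le_rfl
  have hf1 := hf'.mono_measure hle1
  have hf2 := hf'.mono_measure hle2
  haveI : Countable ↥(Set.Ico a t ∩ Dg g) := (hD.mono Set.inter_subset_right).to_subtype
  have hνI : (jumpMeasure g hD).restrict (Set.Ico a t)
      = MeasureTheory.Measure.sum (fun s : (Set.Ico a t ∩ Dg g : Set ℝ) =>
          ENNReal.ofReal (jumpG g s.1) • MeasureTheory.Measure.dirac s.1) := by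
    ext A hA
    rw [MeasureTheory.Measure.restrict_apply hA, jumpMeasure_apply hD (hA.inter hI),
      sumDirac_apply (S := Set.Ico a t ∩ Dg g) (fun x => ENNReal.ofReal (jumpG g x)) hA,
      Set.inter_assoc]
  have hfsum : MeasureTheory.Integrable f
      (MeasureTheory.Measure.sum (fun s : (Set.Ico a t ∩ Dg g : Set ℝ) =>
        ENNReal.ofReal (jumpG g s.1) • MeasureTheory.Measure.dirac s.1)) := by
    rw [← hνI]; exact hf2
  have hstep : (∫ x in Set.Ico a t, f x ∂(stieltjesMeasure g))
      = (∫ x in Set.Ico a t, f x ∂(stieltjesMeasure (contPart g a)))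
        + ∫ x, f x ∂((jumpMeasure g hD).restrict (Set.Ico a t)) := by
    rw [show (∫ x in Set.Ico a t, f x ∂(stieltjesMeasure g))
        = ∫ x, f x ∂((stieltjesMeasure g).restrict (Set.Ico a t)) from rfl, hrestr]
    exact MeasureTheory.integral_add_measure hf1 hf2
  rw [hstep, hνI, MeasureTheory.integral_sum_measure hfsum]
  congr 1
  refine tsum_congr fun s => ?_
  rw [MeasureTheory.integral_smul_measure, MeasureTheory.integral_dirac,
    ENNReal.toReal_ofReal (jumpG_nonneg hm s.1)]
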